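/- For any exacting algorithm, if two states X and Y are isomorphic as ℱ-structures, then Γ(X) = Γ(Y). -/

import Mathlib

open scoped Classical

/-- Ground terms over a vocabulary `F`: a function symbol applied to a list of terms. -/
inductive GTerm (F : Type) : Type where
  | app : F → List (GTerm F) → GTerm F

/-- The subterm relation on ground terms. -/
inductive Subterm {F : Type} : GTerm F → GTerm F → Prop where
  | refl (t : GTerm F) : Subterm t t
  | arg {s t : GTerm F} {f : F} {args : List (GTerm F)} :
      t ∈ args → Subterm s t → Subterm s (GTerm.app f args)

/-- A state: a first-order structure over vocabulary `F`, with base set drawn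
from a common universe `U`, interpreting every function symbol. -/
structure State (F U : Type) where
  base : Set U
  interp : F → List U → U
  closed : ∀ (f : F) (as : List U), (∀ a ∈ as, a ∈ base) → interp f as ∈ base

mutual
/-- Value of a ground term in a state. -/
def evalT {F U : Type} (X : State F U) : GTerm F → U
  | GTerm.app f args => X.interp f (evalList X args)

/-- Values of a list of ground terms in a state. -/
def evalList {F U : Type} (X : State F U) : List (GTerm F) → List U
  | [] => []
  | t :: ts => evalT X t :: evalList X ts
end

/-- The interpretation of the nullary symbol `trueS` in state `X`. -/
def tval {F U : Type} (trueS : F) (X : State F U) : U := X.interp trueS []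

/-- The interpretation of the nullary symbol `falseS` in state `X`. -/
def fval {F U : Type} (falseS : F) (X : State F U) : U := X.interp falseS []

/-- `X ⊨ C`: the term `C` evaluates in `X` to the interpretation of true. -/
def Holds {F U : Type} (trueS : F) (X : State F U) (C : GTerm F) : Prop :=
  evalT X C = tval trueS X

/-- A location–value pair `f(ā) ↦ b`. -/
abbrev Update (F U : Type) : Type := (F × List U) × U

/-- Two states agree on the values of all terms of `T`. -/
def AgreeOn {F U : Type} (T : Set (GTerm F)) (X Y : State F U) : Prop :=
  ∀ t ∈ T, evalT X t = evalT Y t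

/-- A term takes opposite truth values in `X` and `Y`. -/
def OppVals {F U : Type} (trueS falseS : F) (s : GTerm F) (X Y : State F U) : Prop :=
  (evalT X s = tval trueS X ∧ evalT Y s = fval falseS Y) ∨
  (evalT X s = fval falseS X ∧ evalT Y s = tval trueS Y)

/-- `lt` is a strict partial order whose field is contained in `T`. -/
def StrictOrderOn {F : Type} (T : Set (GTerm F)) (lt : GTerm F → GTerm F → Prop) : Prop :=
  (∀ s t, lt s t → s ∈ T ∧ t ∈ T) ∧ (∀ t, ¬ lt t t) ∧
  (∀ r s t, lt r s → lt s t → lt r t)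

/-- Abstract state machine programs over vocabulary `F`. -/
inductive Prog (F : Type) : Type where
  | assign : F → List (GTerm F) → GTerm F → Prog F
  | par : List (Prog F) → Prog F
  | cond : GTerm F → Prog F → Prog F

mutual
/-- The raw set of updates proposed by an ASM program in a state. -/
def updSet {F U : Type} (trueS : F) : Prog F → State F U → Set (Update F U)
  | Prog.assign f ss t, X => {((f, evalList X ss), evalT X t)}
  | Prog.par Ps, X => updSetList trueS Ps X
  | Prog.cond C P, X => {u | Holds trueS X C ∧ u ∈ updSet trueS P X}

def updSetList {F U : Type} (trueS : F) : List (Prog F) → State F U → Set (Update F U)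
  | [], _ => ∅
  | P :: Ps, X => updSet trueS P X ∪ updSetList trueS Ps X
end

/-- The program proposes two conflicting updates of the same location. -/
def Clash {F U : Type} (trueS : F) (P : Prog F) (X : State F U) : Prop :=
  ∃ l b b', (l, b) ∈ updSet trueS P X ∧ (l, b') ∈ updSet trueS P X ∧ b ≠ b'

/-- The proposed update set `Δ⁺_P(X)`; `none` is `⊥` (a clash). -/
noncomputable def DeltaPlus {F U : Type} (trueS : F) (P : Prog F) (X : State F U) :
    Option (Set (Update F U)) :=
  if Clash trueS P X then none else some (updSet trueS P X)

/-- The update set `Δ_P(X)` of an ASM program: `⊥` when `Δ⁺` is `∅` or `⊥`,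
and otherwise `Δ⁺` with all trivial updates removed. -/
noncomputable def DeltaASM {F U : Type} (trueS : F) (P : Prog F) (X : State F U) :
    Option (Set (Update F U)) :=
  if Clash trueS P X ∨ updSet trueS P X = ∅ then none
  else some {u ∈ updSet trueS P X | X.interp u.1.1 u.1.2 ≠ u.2}

mutual
/-- Raw explore terms of an ASM program in a state (before closing under
subterms and adding true and false). -/
def gamma0 {F U : Type} (trueS : F) : Prog F → State F U → Set (GTerm F)
  | Prog.assign _ ss t, _ => {x | x ∈ ss} ∪ {t}
  | Prog.par Ps, X => gamma0List trueS Ps X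
  | Prog.cond C P, X => {C} ∪ {x | Holds trueS X C ∧ x ∈ gamma0 trueS P X}

def gamma0List {F U : Type} (trueS : F) : List (Prog F) → State F U → Set (GTerm F)
  | [], _ => ∅
  | P :: Ps, X => gamma0 trueS P X ∪ gamma0List trueS Ps X
end

/-- The explore set `Γ_P(X)` of an ASM program: the raw explore terms
together with true and false, closed under subterms. -/
def GammaASM {F U : Type} (trueS falseS : F) (P : Prog F) (X : State F U) : Set (GTerm F) :=
  {s | ∃ t, (t ∈ gamma0 trueS P X ∨ t = GTerm.app trueS [] ∨ t = GTerm.app falseS []) ∧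
    Subterm s t}

/-- The graph of a state, as a set of location–value pairs over its base set. -/
def State.graph {F U : Type} (X : State F U) : Set (Update F U) :=
  {u | (∀ a ∈ u.1.2, a ∈ X.base) ∧ u.2 = X.interp u.1.1 u.1.2}

/-- `ζ` is an isomorphism of `F`-structures from `X` to `Y`. -/
def IsIso {F U : Type} (ζ : U → U) (X Y : State F U) : Prop :=
  Set.BijOn ζ X.base Y.base ∧
  ∀ (f : F) (as : List U), (∀ a ∈ as, a ∈ X.base) →
    Y.interp f (as.map ζ) = ζ (X.interp f as)

/-- A nested conditional assignment: `if C₁ then if C₂ then ⋯ then A`,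
where `A` is an assignment or the empty parallel statement. -/
inductive NestedCondAssign {F : Type} : Prog F → Prop where
  | assign (f : F) (ss : List (GTerm F)) (t : GTerm F) :
      NestedCondAssign (Prog.assign f ss t)
  | skip : NestedCondAssign (Prog.par [])
  | cond {P : Prog F} (C : GTerm F) :
      NestedCondAssign P → NestedCondAssign (Prog.cond C P)

/-- The shared explore terms `Γ(V) = ⋂_{X ∈ V} Γ(X)` of a set of states. -/
def sharedGamma {F U : Type} (Γ : State F U → Set (GTerm F)) (V : Set (State F U)) :
    Set (GTerm F) :=
  ⋂ X ∈ V, Γ X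

/-- `V` is agreeable: all states in `V` agree on the values of all shared explore terms. -/
def Agreeable {F U : Type} (Γ : State F U → Set (GTerm F)) (V : Set (State F U)) : Prop :=
  ∀ X ∈ V, ∀ Y ∈ V, AgreeOn (sharedGamma Γ V) X Y

/-- `V` is uniform: all states in `V` have the same explore set. -/
def Uniform {F U : Type} (Γ : State F U → Set (GTerm F)) (V : Set (State F U)) : Prop :=
  ∀ X ∈ V, ∀ Y ∈ V, Γ X = Γ Y

/-- The Discrimination property of the order `lt` at state `X`: `lt` is a partial
order on `Γ(X)` and for every state `Y` and every `t ∈ Γ(X) ∖ Γ(Y)` there is an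
`s ∈ Γ(X)` with `s ≺_X t` taking opposite truth values in `X` and `Y`. -/
def Discriminates {F U : Type} (trueS falseS : F) (S : Set (State F U))
    (Γ : State F U → Set (GTerm F)) (X : State F U)
    (lt : GTerm F → GTerm F → Prop) : Prop :=
  StrictOrderOn (Γ X) lt ∧
  ∀ Y ∈ S, ∀ t ∈ Γ X \ Γ Y, ∃ s ∈ Γ X, lt s t ∧ OppVals trueS falseS s X Y

/-- An infinite sequence `X₁, X₂, …` of states and `s₁, s₂, …` of terms such
that for all `i`, `s₁ ≺_{Xᵢ} s₂ ≺_{Xᵢ} ⋯ ≺_{Xᵢ} sᵢ`, where `sᵢ` takes opposite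
truth values in `Xᵢ` and `Xⱼ` for every `j > i`. -/
def BadChain {F U : Type} (trueS falseS : F) (S : Set (State F U))
    (lt : State F U → GTerm F → GTerm F → Prop) : Prop :=
  ∃ (Xs : ℕ → State F U) (ss : ℕ → GTerm F),
    (∀ i, Xs i ∈ S) ∧
    (∀ i j, j < i → lt (Xs i) (ss j) (ss (j + 1))) ∧
    (∀ i j, i < j → OppVals trueS falseS (ss i) (Xs i) (Xs j))

/-! An isomorphism carries the value of every ground term, `true` and `false` included, from
one state to the other, so no term takes opposite truth values in isomorphic states.
Discrimination then leaves no term in one explore set but not in the other. -/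

section Iso

variable {F U : Type}

theorem evalList_eq_map (X : State F U) :
    ∀ ts : List (GTerm F), evalList X ts = ts.map (evalT X)
  | [] => rfl
  | t :: ts => by
    show evalT X t :: evalList X ts = _
    rw [evalList_eq_map X ts, List.map_cons]

theorem evalT_app (X : State F U) (f : F) (args : List (GTerm F)) :
    evalT X (GTerm.app f args) = X.interp f (args.map (evalT X)) := by
  rw [← evalList_eq_map]
  rfl

theorem evalT_mem_base (X : State F U) : ∀ t : GTerm F, evalT X t ∈ X.base
  | GTerm.app f args => by
    rw [evalT_app]
    refine X.closed f _ fun a ha => ?_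
    obtain ⟨t, ht, rfl⟩ := List.mem_map.mp ha
    exact evalT_mem_base X t

theorem IsIso.evalT_eq {ζ : U → U} {X Y : State F U} (h : IsIso ζ X Y) :
    ∀ t : GTerm F, evalT Y t = ζ (evalT X t)
  | GTerm.app f args => by
    have hargs : args.map (evalT Y) = (args.map (evalT X)).map ζ := by
      rw [List.map_map]
      exact List.map_congr_left fun t _ => h.evalT_eq t
    rw [evalT_app, evalT_app, hargs]
    refine h.2 f _ fun a ha => ?_
    obtain ⟨t, -, rfl⟩ := List.mem_map.mp ha
    exact evalT_mem_base X t

theorem IsIso.interp_nil {ζ : U → U} {X Y : State F U} (h : IsIso ζ X Y) (f : F) :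
    Y.interp f [] = ζ (X.interp f []) :=
  h.2 f [] (by simp)

theorem OppVals.symm {trueS falseS : F} {s : GTerm F} {X Y : State F U}
    (h : OppVals trueS falseS s X Y) : OppVals trueS falseS s Y X :=
  (Or.symm h).imp And.symm And.symm

theorem IsIso.not_oppVals {ζ : U → U} {X Y : State F U} (h : IsIso ζ X Y)
    {trueS falseS : F} (htf : tval trueS Y ≠ fval falseS Y) (s : GTerm F) :
    ¬ OppVals trueS falseS s X Y := by
  have ht : tval trueS Y = ζ (tval trueS X) := h.interp_nil trueS
  have hf : fval falseS Y = ζ (fval falseS X) := h.interp_nil falseS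
  rintro (⟨hX, hY⟩ | ⟨hX, hY⟩)
  · exact htf (by rw [← hY, h.evalT_eq, hX, ← ht])
  · exact htf (by rw [← hY, h.evalT_eq, hX, ← hf])

end Iso

theorem Discriminates.subset_of_forall_not_oppVals {F U : Type} {trueS falseS : F}
    {S : Set (State F U)} {Γ : State F U → Set (GTerm F)} {X Y : State F U}
    {lt : GTerm F → GTerm F → Prop} (h : Discriminates trueS falseS S Γ X lt) (hY : Y ∈ S)
    (hXY : ∀ s, ¬ OppVals trueS falseS s X Y) : Γ X ⊆ Γ Y := by
  intro t htX
  by_contra htY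
  obtain ⟨s, -, -, hs⟩ := h.2 Y hY t ⟨htX, htY⟩
  exact hXY s hs

/-- For any exacting algorithm, isomorphic states have the same explore set. -/
theorem exacting_iso_gamma_eq {F U : Type} [Finite F] (trueS falseS : F)
    (S : Set (State F U)) (Δ : State F U → Option (Set (Update F U)))
    (Γ : State F U → Set (GTerm F))
    -- true and false are interpreted as distinct elements in every state
    (htf : ∀ X ∈ S, tval trueS X ≠ fval falseS X)
    -- explore sets are finite sets of ground terms, closed under subterms
    (hfin : ∀ X ∈ S, (Γ X).Finite)
    (hsub : ∀ X ∈ S, ∀ t ∈ Γ X, ∀ s, Subterm s t → s ∈ Γ X)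
    -- Determination
    (hdet : ∀ X ∈ S, ∀ Y ∈ S, AgreeOn (Γ X) X Y → Δ X = Δ Y)
    -- Discrimination
    (hdisc : ∀ X ∈ S, ∃ lt, Discriminates trueS falseS S Γ X lt)
    -- Limitation
    (hlim : (⋃ X ∈ S, Γ X).Finite)
    -- X and Y are isomorphic states
    (X : State F U) (hX : X ∈ S) (Y : State F U) (hY : Y ∈ S)
    (hiso : ∃ ζ, IsIso ζ X Y) :
    Γ X = Γ Y := by
  obtain ⟨ζ, hζ⟩ := hiso
  have hXY : ∀ s, ¬ OppVals trueS falseS s X Y := hζ.not_oppVals (htf Y hY)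
  obtain ⟨ltX, hdiscX⟩ := hdisc X hX
  obtain ⟨ltY, hdiscY⟩ := hdisc Y hY
  exact (hdiscX.subset_of_forall_not_oppVals hY hXY).antisymm
    (hdiscY.subset_of_forall_not_oppVals hX fun s hs => hXY s hs.symm)
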